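/- arXiv:math/0603080 — 2 statements merged into one kernel-verified Lean document; each statement's English description precedes it below -/
import Mathlib

section
/- Let m = -1, γ < 0, and let f be an unbounded solution on [0,∞) of f''' + f f'' + (f')² = 0 with f(0) = -γ, f''(0) = -1, f'(∞) = 0. Then f(t)f'(t) → -(1 + γ f'(0)) as t → ∞, and consequently f(t) ~ √(-2(1+γf'(0))) · √t as t → ∞. -/
/-!
Differentiating shows that `f'' + f f'` is constant, equal to `C = -(1 + γ f'(0))`, and then that
`f' + f²/2 - C t` is constant, so `f²/t → 2C` because `f' → 0`. For the product, `f f' = C - f''`,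
so it remains to see `f'' → 0`. Once `f ≥ 1` and `f'² < ε`, the equation
`f''' = -f f'' - f'²` makes the strip `|f''| ≤ ε` forward invariant, and the mean value theorem on
an interval where `f'` is already small provides a point inside the strip.
-/

open Filter Topology Set

theorem ContDiff.hasDerivAt_iteratedDeriv {f : ℝ → ℝ} {n m : ℕ} (hf : ContDiff ℝ n f)
    (hm : m < n) (t : ℝ) : HasDerivAt (iteratedDeriv m f) (iteratedDeriv (m + 1) f t) t := by
  rw [iteratedDeriv_succ]
  exact (hf.differentiable_iteratedDeriv m (by exact_mod_cast hm) t).hasDerivAt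

theorem eq_add_mul_sub_of_hasDerivAt_const {g : ℝ → ℝ} {a c : ℝ}
    (hg : ∀ x ≥ a, HasDerivAt g c x) : ∀ x ≥ a, g x = g a + c * (x - a) := by
  intro x hx
  have hderiv : ∀ y ≥ a, HasDerivAt (fun y => g y - c * (y - a)) 0 y := fun y hy =>
    ((hg y hy).sub (((hasDerivAt_id' y).sub_const a).const_mul c)).congr_deriv (by ring)
  have := constant_of_has_deriv_right_zero
    (fun y hy => (hderiv y hy.1).continuousAt.continuousWithinAt)
    (fun y hy => (hderiv y hy.1).hasDerivWithinAt) x ⟨hx, le_rfl⟩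
  simp only [sub_self, mul_zero, sub_zero] at this
  linarith

theorem le_of_hasDerivAt_neg_of_eq {g g' : ℝ → ℝ} {a c : ℝ}
    (hg : ∀ x ≥ a, HasDerivAt g (g' x) x) (ha : g a ≤ c)
    (hc : ∀ x ≥ a, g x = c → g' x < 0) : ∀ x ≥ a, g x ≤ c := fun _ hx =>
  image_le_of_deriv_right_lt_deriv_boundary (B' := fun _ => 0)
    (fun y hy => (hg y hy.1).continuousAt.continuousWithinAt)
    (fun y hy => (hg y hy.1).hasDerivWithinAt) ha (fun _ => hasDerivAt_const _ c)
    (fun y hy => hc y hy.1) ⟨hx, le_rfl⟩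

theorem abs_le_of_hasDerivAt_of_abs_eq {g g' : ℝ → ℝ} {a c : ℝ}
    (hg : ∀ x ≥ a, HasDerivAt g (g' x) x) (ha : |g a| ≤ c)
    (hup : ∀ x ≥ a, g x = c → g' x < 0) (hlow : ∀ x ≥ a, g x = -c → 0 < g' x) :
    ∀ x ≥ a, |g x| ≤ c := by
  intro x hx
  have hle := le_of_hasDerivAt_neg_of_eq hg (abs_le.1 ha).2 hup x hx
  have hge := le_of_hasDerivAt_neg_of_eq (g := fun y => -g y) (g' := fun y => -g' y) (c := c)
    (fun y hy => (hg y hy).neg) (by linarith [(abs_le.1 ha).1])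
    (fun y hy hy' => neg_neg_of_pos (hlow y hy (by linarith))) x hx
  exact abs_le.2 ⟨by linarith, hle⟩

theorem tendsto_div_sqrt_of_tendsto_sq_div {g : ℝ → ℝ} {L : ℝ}
    (h : Tendsto (fun t => g t ^ 2 / t) atTop (𝓝 L)) (hg : ∀ᶠ t in atTop, 0 ≤ g t) :
    Tendsto (fun t => g t / √t) atTop (𝓝 √L) := by
  refine ((Real.continuous_sqrt.tendsto L).comp h).congr' ?_
  filter_upwards [eventually_gt_atTop 0, hg] with t ht hgt
  simp only [Function.comp_apply]
  rw [Real.sqrt_div (sq_nonneg _), Real.sqrt_sq hgt]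

section ODE

variable {f f₁ f₂ f₃ : ℝ → ℝ}

theorem first_integral_of_ode (h₀ : ∀ t, HasDerivAt f (f₁ t) t) (h₁ : ∀ t, HasDerivAt f₁ (f₂ t) t)
    (h₂ : ∀ t, HasDerivAt f₂ (f₃ t) t) (hode : ∀ t ≥ 0, f₃ t + f t * f₂ t + f₁ t ^ 2 = 0) :
    ∀ t ≥ 0, f₂ t + f t * f₁ t = f₂ 0 + f 0 * f₁ 0 := by
  intro t ht
  have := eq_add_mul_sub_of_hasDerivAt_const (g := fun t => f₂ t + f t * f₁ t) (c := 0)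
    (fun x hx => ((h₂ x).add ((h₀ x).mul (h₁ x))).congr_deriv
      (by linear_combination hode x hx)) t ht
  simpa using this

theorem second_integral_of_first_integral {C : ℝ} (h₀ : ∀ t, HasDerivAt f (f₁ t) t)
    (h₁ : ∀ t, HasDerivAt f₁ (f₂ t) t) (hC : ∀ t ≥ 0, f₂ t + f t * f₁ t = C) :
    ∀ t ≥ 0, f₁ t + f t ^ 2 / 2 = f₁ 0 + f 0 ^ 2 / 2 + C * t := by
  intro t ht
  have := eq_add_mul_sub_of_hasDerivAt_const (g := fun t => f₁ t + f t ^ 2 / 2) (c := C)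
    (fun x hx => ((h₁ x).add (((h₀ x).pow 2).div_const 2)).congr_deriv
      (by linear_combination hC x hx)) t ht
  simpa using this

theorem eventually_abs_le_of_ode (h₁ : ∀ t, HasDerivAt f₁ (f₂ t) t)
    (h₂ : ∀ t, HasDerivAt f₂ (f₃ t) t) (hode : ∀ t ≥ 0, f₃ t + f t * f₂ t + f₁ t ^ 2 = 0)
    (hf₁ : Tendsto f₁ atTop (𝓝 0)) (hf : Tendsto f atTop atTop) {ε : ℝ} (hε : 0 < ε) :
    ∀ᶠ t in atTop, |f₂ t| ≤ ε := by
  have hsmall : ∀ᶠ t in atTop, f₁ t ∈ Ioo (-(ε / 2)) (ε / 2) :=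
    hf₁.eventually (Ioo_mem_nhds (by linarith) (by linarith))
  have hsq : ∀ᶠ t in atTop, f₁ t ^ 2 < ε :=
    (hf₁.pow 2).eventually (gt_mem_nhds (by simpa using hε))
  obtain ⟨T, hT⟩ := eventually_atTop.1 (hsmall.and (hsq.and
    ((hf.eventually_ge_atTop 1).and (eventually_ge_atTop 0))))
  obtain ⟨s, ⟨hTs, -⟩, hs⟩ := exists_hasDerivAt_eq_slope f₁ f₂ (lt_add_one T)
    (fun x _ => (h₁ x).continuousAt.continuousWithinAt) (fun x _ => h₁ x)
  have hs_le : |f₂ s| ≤ ε := by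
    rw [hs, add_sub_cancel_left, div_one]
    obtain ⟨⟨h₁l, h₁u⟩, -⟩ := hT (T + 1) (by linarith)
    obtain ⟨⟨h₀l, h₀u⟩, -⟩ := hT T le_rfl
    exact abs_le.2 ⟨by linarith, by linarith⟩
  refine eventually_atTop.2 ⟨s, abs_le_of_hasDerivAt_of_abs_eq (fun x _ => h₂ x) hs_le ?_ ?_⟩
  all_goals
    intro x hx hx'
    obtain ⟨-, hx₁, hxf, hx₀⟩ := hT x (by linarith)
    have := hode x hx₀
    rw [hx'] at this
    nlinarith

theorem tendsto_zero_of_ode (h₁ : ∀ t, HasDerivAt f₁ (f₂ t) t)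
    (h₂ : ∀ t, HasDerivAt f₂ (f₃ t) t) (hode : ∀ t ≥ 0, f₃ t + f t * f₂ t + f₁ t ^ 2 = 0)
    (hf₁ : Tendsto f₁ atTop (𝓝 0)) (hf : Tendsto f atTop atTop) :
    Tendsto f₂ atTop (𝓝 0) :=
  NormedAddGroup.tendsto_nhds_zero.2 fun ε hε =>
    (eventually_abs_le_of_ode h₁ h₂ hode hf₁ hf (half_pos hε)).mono fun t ht => by
      rw [Real.norm_eq_abs]
      linarith

theorem tendsto_sq_div_of_first_integral {C : ℝ} (h₀ : ∀ t, HasDerivAt f (f₁ t) t)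
    (h₁ : ∀ t, HasDerivAt f₁ (f₂ t) t) (hC : ∀ t ≥ 0, f₂ t + f t * f₁ t = C)
    (hf₁ : Tendsto f₁ atTop (𝓝 0)) :
    Tendsto (fun t => f t ^ 2 / t) atTop (𝓝 (2 * C)) := by
  have hrem : Tendsto (fun t => 2 * C + (2 * f₁ 0 + f 0 ^ 2 - 2 * f₁ t) * t⁻¹) atTop
      (𝓝 (2 * C + (2 * f₁ 0 + f 0 ^ 2 - 2 * 0) * 0)) :=
    tendsto_const_nhds.add ((tendsto_const_nhds.sub (hf₁.const_mul 2)).mul tendsto_inv_atTop_zero)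
  rw [mul_zero, add_zero] at hrem
  refine hrem.congr' ?_
  filter_upwards [eventually_gt_atTop 0] with t ht
  have := second_integral_of_first_integral h₀ h₁ hC t ht.le
  rw [show f t ^ 2 = 2 * C * t + (2 * f₁ 0 + f 0 ^ 2 - 2 * f₁ t) by linarith]
  field_simp

end ODE

theorem stmt_15_general (γ : ℝ)
    (f : ℝ → ℝ) (hf : ContDiff ℝ 3 f)
    (hode : ∀ t ≥ (0:ℝ), iteratedDeriv 3 f t + f t * iteratedDeriv 2 f t
      + (deriv f t) ^ 2 = 0)
    (h0 : f 0 = -γ) (h2 : iteratedDeriv 2 f 0 = -1)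
    (hlim : Filter.Tendsto (deriv f) Filter.atTop (nhds 0))
    (hunb : Filter.Tendsto f Filter.atTop Filter.atTop) :
    Filter.Tendsto (fun t => f t * deriv f t) Filter.atTop (nhds (-(1 + γ * deriv f 0))) ∧
    Filter.Tendsto (fun t => f t / Real.sqrt t) Filter.atTop
      (nhds (Real.sqrt (-2 * (1 + γ * deriv f 0)))) := by
  have h₀ (t : ℝ) : HasDerivAt f (deriv f t) t := (hf.differentiable (by norm_num) t).hasDerivAt
  have h₁ (t : ℝ) : HasDerivAt (deriv f) (iteratedDeriv 2 f t) t := by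
    simpa only [iteratedDeriv_one] using hf.hasDerivAt_iteratedDeriv (m := 1) (by norm_num) t
  have h₂ (t : ℝ) : HasDerivAt (iteratedDeriv 2 f) (iteratedDeriv 3 f t) t :=
    hf.hasDerivAt_iteratedDeriv (m := 2) (by norm_num) t
  have hC : ∀ t ≥ 0, iteratedDeriv 2 f t + f t * deriv f t = -(1 + γ * deriv f 0) := by
    intro t ht
    rw [first_integral_of_ode h₀ h₁ h₂ hode t ht, h0, h2]
    ring
  have hf₂ := tendsto_zero_of_ode h₁ h₂ hode hlim hunb
  constructor
  · have hlim₁ := (tendsto_const_nhds (x := -(1 + γ * deriv f 0))).sub hf₂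
    rw [sub_zero] at hlim₁
    refine hlim₁.congr' ?_
    filter_upwards [eventually_ge_atTop 0] with t ht
    linarith [hC t ht]
  · rw [show -2 * (1 + γ * deriv f 0) = 2 * -(1 + γ * deriv f 0) by ring]
    exact tendsto_div_sqrt_of_tendsto_sq_div (tendsto_sq_div_of_first_integral h₀ h₁ hC hlim)
      (hunb.eventually_ge_atTop 0)

theorem stmt_15 (γ : ℝ) (hγ : γ < 0)
    (f : ℝ → ℝ) (hf : ContDiff ℝ 3 f)
    (hode : ∀ t ≥ (0:ℝ), iteratedDeriv 3 f t + f t * iteratedDeriv 2 f t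
      + (deriv f t) ^ 2 = 0)
    (h0 : f 0 = -γ) (h2 : iteratedDeriv 2 f 0 = -1)
    (hlim : Filter.Tendsto (deriv f) Filter.atTop (nhds 0))
    (hunb : Filter.Tendsto f Filter.atTop Filter.atTop) :
    Filter.Tendsto (fun t => f t * deriv f t) Filter.atTop (nhds (-(1 + γ * deriv f 0))) ∧
    Filter.Tendsto (fun t => f t / Real.sqrt t) Filter.atTop
      (nhds (Real.sqrt (-2 * (1 + γ * deriv f 0)))) :=
  stmt_15_general γ f hf hode h0 h2 hlim hunb
end

section
/- Let m > -1/2 and let f be a concave solution on [0,∞) of f''' + (m+2) f f'' - (2m+1)(f')² = 0 with f(0) = -γ, f''(0) = -1 and f'(∞) = 0. Then such a concave solution is unique: if f₁ and f₂ are two solutions with f''ᵢ < 0 on [0,∞), then f₁ = f₂. -/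
/-!
If `f₁'(0) > f₂'(0)`, the difference `k = f₁ - f₂` has `k(0) = k''(0) = 0 < k'(0)`, and the
equation gives `k''' = (2m+1)(f₁' + f₂') k' - (m+2)(f₁ k'' + f₂'' k)`. At a first zero `t ≥ 0`
of `k''`, the functions `k` and `k'` have only grown on `[0, t]`, so `k'''(t) > 0` since
`f₂' > 0` and `f₂'' < 0`. Hence `k'' > 0` for `t > 0` and `k'` increases from `k'(0) > 0`,
contradicting `k'(∞) = 0`. With equal data at `0`, the jets `(f, f', f'')` of both functions
solve the same autonomous system with a locally Lipschitz vector field, so they coincide.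
-/

open Filter Set Topology

theorem ContDiff.hasDerivAt_iteratedDeriv_s18 {𝕜 F : Type*} [NontriviallyNormedField 𝕜]
    [NormedAddCommGroup F] [NormedSpace 𝕜 F] {f : 𝕜 → F} {n : WithTop ℕ∞}
    (hf : ContDiff 𝕜 n f) {k : ℕ} (hk : (k : WithTop ℕ∞) < n) (t : 𝕜) :
    HasDerivAt (iteratedDeriv k f) (iteratedDeriv (k + 1) f t) t := by
  rw [iteratedDeriv_succ]
  exact (hf.differentiable_iteratedDeriv k hk t).hasDerivAt

theorem ContDiff.hasDerivAt_deriv {𝕜 F : Type*} [NontriviallyNormedField 𝕜]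
    [NormedAddCommGroup F] [NormedSpace 𝕜 F] {f : 𝕜 → F} {n : WithTop ℕ∞}
    (hf : ContDiff 𝕜 n f) (hn : 2 ≤ n) (t : 𝕜) :
    HasDerivAt (deriv f) (iteratedDeriv 2 f t) t := by
  simpa using hf.hasDerivAt_iteratedDeriv_s18 (k := 1) (lt_of_lt_of_le (by norm_num) hn) t

theorem monotoneOn_Icc_of_hasDerivAt_nonneg {g g' : ℝ → ℝ} {a b : ℝ}
    (hg : ∀ t, HasDerivAt g (g' t) t) (hg' : ∀ s ∈ Ioo a b, 0 ≤ g' s) :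
    MonotoneOn g (Icc a b) :=
  monotoneOn_of_hasDerivWithinAt_nonneg (convex_Icc a b)
    (fun t _ => (hg t).continuousAt.continuousWithinAt) (fun t _ => (hg t).hasDerivWithinAt)
    (by rwa [interior_Icc])

theorem StrictMonoOn.lt_of_tendsto_atTop {g : ℝ → ℝ} {a l : ℝ} (hg : StrictMonoOn g (Ici a))
    (hlim : Tendsto g atTop (𝓝 l)) {t : ℝ} (ht : a ≤ t) : g t < l := by
  have hle : g (t + 1) ≤ l := ge_of_tendsto hlim <| by
    filter_upwards [eventually_ge_atTop (t + 1)] with x hx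
    exact hg.monotoneOn (mem_Ici.2 (by linarith)) (mem_Ici.2 (by linarith)) hx
  exact (hg ht (mem_Ici.2 (by linarith)) (lt_add_one t)).trans_le hle

theorem StrictAntiOn.lt_of_tendsto_atTop {g : ℝ → ℝ} {a l : ℝ} (hg : StrictAntiOn g (Ici a))
    (hlim : Tendsto g atTop (𝓝 l)) {t : ℝ} (ht : a ≤ t) : l < g t :=
  neg_lt_neg_iff.1 (hg.neg.lt_of_tendsto_atTop hlim.neg ht)

theorem deriv_pos_of_concave {f : ℝ → ℝ} {a : ℝ} (hf : ContDiff ℝ 2 f)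
    (hconc : ∀ t ≥ a, iteratedDeriv 2 f t < 0) (hlim : Tendsto (deriv f) atTop (𝓝 0))
    {t : ℝ} (ht : a ≤ t) : 0 < deriv f t := by
  have hanti : StrictAntiOn (deriv f) (Ici a) :=
    strictAntiOn_of_hasDerivWithinAt_neg (convex_Ici a)
      (fun s _ => (hf.hasDerivAt_deriv le_rfl s).continuousAt.continuousWithinAt)
      (fun s _ => (hf.hasDerivAt_deriv le_rfl s).hasDerivWithinAt)
      (by simpa only [interior_Ici] using fun s (hs : s ∈ Ioi a) => hconc s (le_of_lt hs))
  exact hanti.lt_of_tendsto_atTop hlim ht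

theorem pos_of_hasDerivAt_pos_at_first_zero {g g' : ℝ → ℝ} {a : ℝ}
    (hg : ∀ t ≥ a, HasDerivAt g (g' t) t) (ha : g a = 0)
    (hcross : ∀ t ≥ a, (∀ s ∈ Ioo a t, 0 < g s) → g t = 0 → 0 < g' t) {t : ℝ} (ht : a < t) :
    0 < g t := by
  by_contra! hgt
  set S := {s | a < s ∧ g s ≤ 0}
  have hSne : S.Nonempty := ⟨t, ht, hgt⟩
  have hSbdd : BddBelow S := ⟨a, fun s hs => hs.1.le⟩
  set t₀ := sInf S
  have ht₀ : a ≤ t₀ := le_csInf hSne fun s hs => hs.1.le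
  have hbefore : ∀ s ∈ Ioo a t₀, 0 < g s := fun s hs => by
    by_contra! hs'
    exact (csInf_le hSbdd ⟨hs.1, hs'⟩).not_gt hs.2
  have hcont : ContinuousAt g t₀ := (hg t₀ ht₀).continuousAt
  have hle : g t₀ ≤ 0 := by
    have := mem_closure_iff_nhdsWithin_neBot.1 (csInf_mem_closure hSne hSbdd)
    exact le_of_tendsto (hcont.tendsto.mono_left nhdsWithin_le_nhds)
      (eventually_nhdsWithin_of_forall fun s (hs : s ∈ S) => hs.2)
  have hzero : g t₀ = 0 := by
    rcases ht₀.eq_or_lt with hat | hat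
    · rwa [← hat]
    · exact le_antisymm hle <| ge_of_tendsto (hcont.tendsto.mono_left nhdsWithin_le_nhds)
        (eventually_of_mem (Ioo_mem_nhdsLT hat) fun s hs => (hbefore s hs).le)
  have hpos := hcross t₀ ht₀ hbefore hzero
  obtain ⟨hleft, hright⟩ := hasDerivAt_iff_tendsto_slope_left_right.1 (hg t₀ ht₀)
  -- `g' t₀ > 0` clashes with `g ≤ 0` at points of `S` just right of `t₀ = a`,
  -- or with `g > 0` just left of `t₀ > a`.
  rcases ht₀.eq_or_lt with hat | hat
  · obtain ⟨u, hu, hslope⟩ := mem_nhdsGT_iff_exists_Ioo_subset.1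
      (hright.eventually (lt_mem_nhds hpos))
    obtain ⟨s, hs, hsu⟩ := exists_lt_of_csInf_lt hSne hu
    have : 0 < slope g t₀ s := hslope ⟨hat ▸ hs.1, hsu⟩
    rw [slope_def_field, hzero, sub_zero] at this
    exact ((div_pos_iff_of_pos_right (sub_pos.2 (hat ▸ hs.1))).1 this).not_ge hs.2
  · refine hpos.not_ge (le_of_tendsto hleft ?_)
    filter_upwards [Ioo_mem_nhdsLT hat] with s hs
    rw [slope_def_field, hzero, sub_zero]
    exact div_nonpos_of_nonneg_of_nonpos (hbefore s hs).le (sub_nonpos.2 hs.2.le)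

theorem eqOn_Ici_of_locallyLipschitz {E : Type*} [NormedAddCommGroup E] [NormedSpace ℝ E]
    {v : E → E} (hv : LocallyLipschitz v) {u w : ℝ → E} {a : ℝ}
    (hu : ∀ t ≥ a, HasDerivAt u (v (u t)) t) (hw : ∀ t ≥ a, HasDerivAt w (v (w t)) t)
    (ha : u a = w a) : EqOn u w (Ici a) := by
  intro T hT
  have hcu : ContinuousOn u (Icc a T) := fun t ht => (hu t ht.1).continuousAt.continuousWithinAt
  have hcw : ContinuousOn w (Icc a T) := fun t ht => (hw t ht.1).continuousAt.continuousWithinAt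
  obtain ⟨K, hK⟩ := hv.locallyLipschitzOn.exists_lipschitzOnWith_of_compact
    ((isCompact_Icc.image_of_continuousOn hcu).union (isCompact_Icc.image_of_continuousOn hcw))
  exact ODE_solution_unique_of_mem_Icc_right (v := fun _ => v) (fun _ _ => hK) hcu
    (fun t ht => (hu t ht.1).hasDerivWithinAt)
    (fun t ht => .inl ⟨t, Ico_subset_Icc_self ht, rfl⟩)
    hcw (fun t ht => (hw t ht.1).hasDerivWithinAt)
    (fun t ht => .inr ⟨t, Ico_subset_Icc_self ht, rfl⟩) ha ⟨hT, le_rfl⟩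

def SolvesODE (m : ℝ) (f : ℝ → ℝ) : Prop :=
  ∀ t ≥ (0:ℝ), iteratedDeriv 3 f t + (m + 2) * f t * iteratedDeriv 2 f t
    - (2 * m + 1) * (deriv f t) ^ 2 = 0

theorem deriv_zero_le_of_solvesODE {m : ℝ} (hm : -1/2 < m) {f₁ f₂ : ℝ → ℝ}
    (hf₁ : ContDiff ℝ 3 f₁) (hf₂ : ContDiff ℝ 3 f₂)
    (hode₁ : SolvesODE m f₁) (hode₂ : SolvesODE m f₂)
    (h0 : f₁ 0 = f₂ 0) (h2 : iteratedDeriv 2 f₁ 0 = iteratedDeriv 2 f₂ 0)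
    (hlim₁ : Tendsto (deriv f₁) atTop (𝓝 0)) (hlim₂ : Tendsto (deriv f₂) atTop (𝓝 0))
    (hconc₂ : ∀ t ≥ 0, iteratedDeriv 2 f₂ t < 0) :
    deriv f₁ 0 ≤ deriv f₂ 0 := by
  by_contra! hlt
  let k₀ t := f₁ t - f₂ t
  let k₁ t := deriv f₁ t - deriv f₂ t
  let k₂ t := iteratedDeriv 2 f₁ t - iteratedDeriv 2 f₂ t
  let k₃ t := iteratedDeriv 3 f₁ t - iteratedDeriv 3 f₂ t
  have hk₀ (t : ℝ) : HasDerivAt k₀ (k₁ t) t :=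
    ((hf₁.differentiable (by norm_num) t).hasDerivAt).sub
      (hf₂.differentiable (by norm_num) t).hasDerivAt
  have hk₁ (t : ℝ) : HasDerivAt k₁ (k₂ t) t :=
    (hf₁.hasDerivAt_deriv (by norm_num) t).sub (hf₂.hasDerivAt_deriv (by norm_num) t)
  have hk₂ (t : ℝ) : HasDerivAt k₂ (k₃ t) t :=
    (hf₁.hasDerivAt_iteratedDeriv_s18 (k := 2) (by norm_num) t).sub
      (hf₂.hasDerivAt_iteratedDeriv_s18 (k := 2) (by norm_num) t)
  have hk₃ : ∀ t ≥ 0, k₃ t = (2 * m + 1) * (deriv f₁ t + deriv f₂ t) * k₁ t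
      - (m + 2) * (f₁ t * k₂ t + iteratedDeriv 2 f₂ t * k₀ t) := fun t ht => by
    linear_combination hode₁ t ht - hode₂ t ht
  have hcross : ∀ t ≥ 0, (∀ s ∈ Ioo 0 t, 0 < k₂ s) → k₂ t = 0 → 0 < k₃ t := by
    intro t ht hbefore hzero
    have hk₁_pos : ∀ s ∈ Icc 0 t, 0 < k₁ s := fun s hs => (sub_pos.2 hlt).trans_le
      (monotoneOn_Icc_of_hasDerivAt_nonneg hk₁ (fun s hs => (hbefore s hs).le)
        ⟨le_rfl, ht⟩ hs hs.1)
    have hk₀_nonneg : 0 ≤ k₀ t := (sub_eq_zero.2 h0).symm.trans_le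
      (monotoneOn_Icc_of_hasDerivAt_nonneg hk₀
        (fun s hs => (hk₁_pos s (Ioo_subset_Icc_self hs)).le) ⟨le_rfl, ht⟩ ⟨ht, le_rfl⟩ ht)
    have hk₁t := hk₁_pos t ⟨ht, le_rfl⟩
    have hsum : 0 < deriv f₁ t + deriv f₂ t := by
      linarith [deriv_pos_of_concave (hf₂.of_le (by norm_num)) hconc₂ hlim₂ ht,
        show 0 < deriv f₁ t - deriv f₂ t from hk₁t]
    rw [hk₃ t ht, hzero]
    nlinarith [mul_pos (mul_pos (by linarith : (0:ℝ) < 2 * m + 1) hsum) hk₁t,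
      mul_nonneg (mul_nonneg (by linarith : (0:ℝ) ≤ m + 2) (neg_nonneg.2 (hconc₂ t ht).le))
        hk₀_nonneg]
  have hk₁_mono : StrictMonoOn k₁ (Ici 0) :=
    strictMonoOn_of_hasDerivWithinAt_pos (convex_Ici 0)
      (fun s _ => (hk₁ s).continuousAt.continuousWithinAt) (fun s _ => (hk₁ s).hasDerivWithinAt)
      (by simpa only [interior_Ici] using fun s (hs : s ∈ Ioi 0) =>
        pos_of_hasDerivAt_pos_at_first_zero (fun t _ => hk₂ t) (sub_eq_zero.2 h2) hcross hs)
  have := hk₁_mono.lt_of_tendsto_atTop (by simpa using hlim₁.sub hlim₂) le_rfl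
  linarith

noncomputable def secondJet (f : ℝ → ℝ) (t : ℝ) : ℝ × ℝ × ℝ :=
  (f t, deriv f t, iteratedDeriv 2 f t)

def odeField (m : ℝ) (x : ℝ × ℝ × ℝ) : ℝ × ℝ × ℝ :=
  (x.2.1, x.2.2, (2 * m + 1) * x.2.1 ^ 2 - (m + 2) * x.1 * x.2.2)

theorem locallyLipschitz_odeField (m : ℝ) : LocallyLipschitz (odeField m) :=
  ContDiff.locallyLipschitz (𝕂 := ℝ) (by unfold odeField; fun_prop)

theorem SolvesODE.hasDerivAt_secondJet {m : ℝ} {f : ℝ → ℝ} (hode : SolvesODE m f)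
    (hf : ContDiff ℝ 3 f) {t : ℝ} (ht : 0 ≤ t) :
    HasDerivAt (secondJet f) (odeField m (secondJet f t)) t := by
  have h₃ : iteratedDeriv 3 f t
      = (2 * m + 1) * deriv f t ^ 2 - (m + 2) * f t * iteratedDeriv 2 f t := by
    linear_combination hode t ht
  have := (hf.differentiable (by norm_num) t).hasDerivAt.prodMk
    ((hf.hasDerivAt_deriv (by norm_num) t).prodMk
      (hf.hasDerivAt_iteratedDeriv_s18 (k := 2) (by norm_num) t))
  rwa [h₃] at this

theorem SolvesODE.eqOn_of_secondJet_eq {m : ℝ} {f₁ f₂ : ℝ → ℝ}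
    (hode₁ : SolvesODE m f₁) (hode₂ : SolvesODE m f₂)
    (hf₁ : ContDiff ℝ 3 f₁) (hf₂ : ContDiff ℝ 3 f₂) (h : secondJet f₁ 0 = secondJet f₂ 0) :
    EqOn f₁ f₂ (Ici 0) := fun _ ht =>
  congrArg Prod.fst <| eqOn_Ici_of_locallyLipschitz (locallyLipschitz_odeField m)
    (fun _ hs => hode₁.hasDerivAt_secondJet hf₁ hs)
    (fun _ hs => hode₂.hasDerivAt_secondJet hf₂ hs) h ht

theorem stmt_18 (m γ : ℝ) (hm : m > -1/2)
    (f₁ f₂ : ℝ → ℝ) (hf₁ : ContDiff ℝ 3 f₁) (hf₂ : ContDiff ℝ 3 f₂)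
    (hode₁ : ∀ t ≥ (0:ℝ), iteratedDeriv 3 f₁ t + (m + 2) * f₁ t * iteratedDeriv 2 f₁ t
      - (2 * m + 1) * (deriv f₁ t) ^ 2 = 0)
    (hode₂ : ∀ t ≥ (0:ℝ), iteratedDeriv 3 f₂ t + (m + 2) * f₂ t * iteratedDeriv 2 f₂ t
      - (2 * m + 1) * (deriv f₂ t) ^ 2 = 0)
    (h0₁ : f₁ 0 = -γ) (h0₂ : f₂ 0 = -γ)
    (h2₁ : iteratedDeriv 2 f₁ 0 = -1) (h2₂ : iteratedDeriv 2 f₂ 0 = -1)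
    (hlim₁ : Filter.Tendsto (deriv f₁) Filter.atTop (nhds 0))
    (hlim₂ : Filter.Tendsto (deriv f₂) Filter.atTop (nhds 0))
    (hconc₁ : ∀ t ≥ (0:ℝ), iteratedDeriv 2 f₁ t < 0)
    (hconc₂ : ∀ t ≥ (0:ℝ), iteratedDeriv 2 f₂ t < 0) :
    ∀ t ≥ (0:ℝ), f₁ t = f₂ t := by
  have h0 : f₁ 0 = f₂ 0 := h0₁.trans h0₂.symm
  have h2 : iteratedDeriv 2 f₁ 0 = iteratedDeriv 2 f₂ 0 := h2₁.trans h2₂.symm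
  have hderiv : deriv f₁ 0 = deriv f₂ 0 := le_antisymm
    (deriv_zero_le_of_solvesODE hm hf₁ hf₂ hode₁ hode₂ h0 h2 hlim₁ hlim₂ hconc₂)
    (deriv_zero_le_of_solvesODE hm hf₂ hf₁ hode₂ hode₁ h0.symm h2.symm hlim₂ hlim₁ hconc₁)
  exact SolvesODE.eqOn_of_secondJet_eq hode₁ hode₂ hf₁ hf₂
    (by simp only [secondJet, h0, h2, hderiv])
end
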